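/- Let A be a finite nonempty labeled set partitioned into nonempty parts A_1,...,A_k. If the weighted purity sum W of the parts equals the purity T of A, then for every part A_i, the count in A_i of the majority label of A equals maj(A_i) (i.e., the parent's majority label is also a majority label of every child). -/
import Mathlib


open Finset Metric

/-- Number of elements of `S` with label `l`. -/
def cnt {ι L : Type*} [DecidableEq L] (label : ι → L) (S : Finset ι) (l : L) : ℕ :=
  (S.filter (fun x => label x = l)).card

/-- Maximum label count in `S` (cardinality of the majority class `S*`). -/
def maj {ι L : Type*} [Fintype L] [DecidableEq L] (label : ι → L) (S : Finset ι) : ℕ :=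
  Finset.univ.sup (cnt label S)

/-- Purity of `S`: fraction of elements carrying a most frequent label. -/
noncomputable def purity {ι L : Type*} [Fintype L] [DecidableEq L]
    (label : ι → L) (S : Finset ι) : ℚ :=
  (maj label S : ℚ) / (S.card : ℚ)

theorem majority_of_parts_of_weighted_purity_eq {ι L : Type*} [Fintype L] [DecidableEq L]
    (label : ι → L) (A : Finset ι) (hA : A.Nonempty)
    (k : ℕ) (P : Fin k → Finset ι)
    (hne : ∀ i, (P i).Nonempty)
    (hdisj : ∀ i j, i ≠ j → Disjoint (P i) (P j))
    (hcover : ∀ x, x ∈ A ↔ ∃ i, x ∈ P i)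
    (l : L) (hl : cnt label A l = maj label A)
    (hW : (∑ i, (maj label (P i) : ℚ)) / (A.card : ℚ) = purity label A) :
    ∀ i, cnt label (P i) l = maj label (P i) := by
  classical
  have hAcard : (A.card : ℚ) ≠ 0 := by
    exact_mod_cast (Nat.pos_of_ne_zero (by simp [Finset.card_eq_zero,
      Finset.nonempty_iff_ne_empty.mp hA])).ne'
  have hA_eq : A = Finset.univ.biUnion P := by
    ext x; simp [hcover x]
  have hcnt : cnt label A l = ∑ i, cnt label (P i) l := by
    unfold cnt
    rw [hA_eq, Finset.filter_biUnion, Finset.card_biUnion]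
    intro i _ j _ hij
    exact (hdisj i j hij).mono (Finset.filter_subset _ _) (Finset.filter_subset _ _)
  have hsum : ∑ i, maj label (P i) = maj label A := by
    unfold purity at hW
    have h2 : (∑ i, (maj label (P i) : ℚ)) = (maj label A : ℚ) := by
      field_simp at hW; linarith
    exact_mod_cast h2
  have hle : ∀ i ∈ Finset.univ, cnt label (P i) l ≤ maj label (P i) :=
    fun i _ => Finset.le_sup (Finset.mem_univ l)
  have hseq : ∑ i, cnt label (P i) l = ∑ i, maj label (P i) := by
    rw [← hcnt, hl, hsum]
  intro i
  exact (Finset.sum_eq_sum_iff_of_le hle).mp hseq i (Finset.mem_univ i)
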